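/- arXiv:1811.03334 — 2 statements merged into one kernel-verified Lean document; each statement's English description precedes it below -/
import Mathlib

section
/- Fix $\mu \in (0,1)$, $v > 0$ and $c \in (0,1)$. For each integer $q$ large enough that $\mu(1-\mu)q/v - 1 > 0$, set $a_q = \mu\big(\mu(1-\mu)q/v - 1\big)$, $b_q = (1-\mu)\big(\mu(1-\mu)q/v - 1\big)$ (so that the Beta$(a_q,b_q)$ distribution has mean $\mu$ and variance $v/q$), set $q_s(q) = \lceil c\,q \rceil$ and $R(q) = \big((b_q+q-1)(a_q+q_s(q)-1)\big)/\big(a_q\,(b_q+q-q_s(q))\big)$. Then $R(q)$ converges as $q \to \infty$ to the finite limit $\big(1 + \mu(1-\mu)^2/v\big)\big(\mu^2(1-\mu)/v + c\big) \Big/ \Big(\big(\mu^2(1-\mu)/v\big)\big(1 - c + \mu(1-\mu)^2/v\big)\Big)$. -/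
open Filter

/-- `⌈c q⌉₊ / q → c` as `q → ∞`. -/
lemma ceil_div_tendsto (c : ℝ) (hc : 0 ≤ c) :
    Tendsto (fun q : ℕ => ((⌈c * (q : ℝ)⌉₊ : ℕ) : ℝ) / q) atTop (nhds c) := by
  have h1 : Tendsto (fun q : ℕ => c + 1 / (q : ℝ)) atTop (nhds c) := by
    simpa using tendsto_const_nhds.add (tendsto_one_div_atTop_nhds_zero_nat : Tendsto (fun n : ℕ => 1 / (n : ℝ)) atTop (nhds 0))
  refine tendsto_of_tendsto_of_tendsto_of_le_of_le' tendsto_const_nhds h1 ?_ ?_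
  · filter_upwards [eventually_ge_atTop 1] with q hq
    have hq' : (0 : ℝ) < q := by exact_mod_cast hq
    rw [le_div_iff₀ hq']
    exact Nat.le_ceil _
  · filter_upwards [eventually_ge_atTop 1] with q hq
    have hq' : (0 : ℝ) < q := by exact_mod_cast hq
    rw [div_le_iff₀ hq']
    have := (Nat.ceil_lt_add_one (by positivity : (0:ℝ) ≤ c * q)).le
    calc ((⌈c * (q:ℝ)⌉₊ : ℝ)) ≤ c * q + 1 := this
      _ = (c + 1 / q) * q := by field_simp

/-- Multiplicity adjustment: with `a_q = μ(μ(1-μ)q/v - 1)`,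
`b_q = (1-μ)(μ(1-μ)q/v - 1)` (Beta parameters with mean `μ` and variance `v/q`),
`qs(q) = ⌈c q⌉` and `R(q) = ((b_q+q-1)(a_q+qs(q)-1))/(a_q(b_q+q-qs(q)))`,
the ratio `R(q)` converges to the finite limit
`(1 + μ(1-μ)²/v)(μ²(1-μ)/v + c) / ((μ²(1-μ)/v)(1 - c + μ(1-μ)²/v))`. -/
theorem pile_up_ratio_bounded_under_adjustment
    (μ v c : ℝ) (hμ₁ : 0 < μ) (hμ₂ : μ < 1) (hv : 0 < v)
    (hc₁ : 0 < c) (hc₂ : c < 1) :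
    Tendsto
      (fun q : ℕ =>
        ((((1 - μ) * (μ * (1 - μ) * (q : ℝ) / v - 1)) + (q : ℝ) - 1) *
            ((μ * (μ * (1 - μ) * (q : ℝ) / v - 1)) + ((⌈c * (q : ℝ)⌉₊ : ℕ) : ℝ) - 1)) /
          ((μ * (μ * (1 - μ) * (q : ℝ) / v - 1)) *
            (((1 - μ) * (μ * (1 - μ) * (q : ℝ) / v - 1)) + (q : ℝ) - ((⌈c * (q : ℝ)⌉₊ : ℕ) : ℝ))))
      atTop
      (nhds ((1 + μ * (1 - μ) ^ 2 / v) * (μ ^ 2 * (1 - μ) / v + c) /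
        ((μ ^ 2 * (1 - μ) / v) * (1 - c + μ * (1 - μ) ^ 2 / v)))) := by
  set K : ℝ := μ * (1 - μ) / v with hK
  have hμ' : 0 < 1 - μ := by linarith
  have hKpos : 0 < K := by positivity
  have hinv : Tendsto (fun q : ℕ => 1 / (q : ℝ)) atTop (nhds 0) :=
    tendsto_one_div_atTop_nhds_zero_nat
  have hr : Tendsto (fun q : ℕ => ((⌈c * (q : ℝ)⌉₊ : ℕ) : ℝ) / q) atTop (nhds c) :=
    ceil_div_tendsto c hc₁.le
  -- limits of the four normalized factors
  have hA : Tendsto (fun q : ℕ => (1 - μ) * (K - 1 / (q:ℝ)) + 1 - 1 / (q:ℝ)) atTop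
      (nhds ((1 - μ) * K + 1)) := by
    have h1 := ((tendsto_const_nhds (x := K)).sub hinv).const_mul (1 - μ)
    simpa using (h1.add (tendsto_const_nhds (x := (1:ℝ)))).sub hinv
  have hB : Tendsto (fun q : ℕ => μ * (K - 1 / (q:ℝ)) + ((⌈c * (q : ℝ)⌉₊ : ℕ) : ℝ) / q
      - 1 / (q:ℝ)) atTop (nhds (μ * K + c)) := by
    have h1 := ((tendsto_const_nhds (x := K)).sub hinv).const_mul μ
    simpa using (h1.add hr).sub hinv
  have hC : Tendsto (fun q : ℕ => μ * (K - 1 / (q:ℝ))) atTop (nhds (μ * K)) := by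
    simpa using ((tendsto_const_nhds (x := K)).sub hinv).const_mul μ
  have hD : Tendsto (fun q : ℕ => (1 - μ) * (K - 1 / (q:ℝ)) + 1
      - ((⌈c * (q : ℝ)⌉₊ : ℕ) : ℝ) / q) atTop (nhds ((1 - μ) * K + 1 - c)) := by
    have h1 := ((tendsto_const_nhds (x := K)).sub hinv).const_mul (1 - μ)
    simpa using (h1.add (tendsto_const_nhds (x := (1:ℝ)))).sub hr
  have hden : (μ * K) * ((1 - μ) * K + 1 - c) ≠ 0 := by
    have h1 : 0 < μ * K := by positivity
    have h2 : 0 < (1 - μ) * K + 1 - c := by nlinarith [mul_pos hμ' hKpos]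
    positivity
  have hlim : Tendsto (fun q : ℕ =>
      (((1 - μ) * (K - 1 / (q:ℝ)) + 1 - 1 / (q:ℝ)) *
        (μ * (K - 1 / (q:ℝ)) + ((⌈c * (q : ℝ)⌉₊ : ℕ) : ℝ) / q - 1 / (q:ℝ))) /
      ((μ * (K - 1 / (q:ℝ))) *
        ((1 - μ) * (K - 1 / (q:ℝ)) + 1 - ((⌈c * (q : ℝ)⌉₊ : ℕ) : ℝ) / q))) atTop
      (nhds ((((1 - μ) * K + 1) * (μ * K + c)) / ((μ * K) * ((1 - μ) * K + 1 - c)))) :=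
    (hA.mul hB).div (hC.mul hD) hden
  have heq : (((1 - μ) * K + 1) * (μ * K + c)) / ((μ * K) * ((1 - μ) * K + 1 - c))
      = (1 + μ * (1 - μ) ^ 2 / v) * (μ ^ 2 * (1 - μ) / v + c) /
        ((μ ^ 2 * (1 - μ) / v) * (1 - c + μ * (1 - μ) ^ 2 / v)) := by
    rw [hK]; ring_nf
  rw [← heq]
  refine hlim.congr' ?_
  filter_upwards [eventually_ge_atTop 1] with q hq
  have hq0 : (q : ℝ) ≠ 0 := by positivity
  have key : ∀ x y : ℝ, (x / ((q:ℝ) * q)) / (y / ((q:ℝ) * q)) = x / y :=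
    fun x y => div_div_div_cancel_right₀ (mul_ne_zero hq0 hq0) x y
  have e1 : (1 - μ) * (K - 1 / (q:ℝ)) + 1 - 1 / (q:ℝ)
      = (((1 - μ) * (μ * (1 - μ) * (q : ℝ) / v - 1)) + (q : ℝ) - 1) / q := by
    rw [hK]; field_simp; try ring
  have e2 : μ * (K - 1 / (q:ℝ)) + ((⌈c * (q : ℝ)⌉₊ : ℕ) : ℝ) / q - 1 / (q:ℝ)
      = ((μ * (μ * (1 - μ) * (q : ℝ) / v - 1)) + ((⌈c * (q : ℝ)⌉₊ : ℕ) : ℝ) - 1) / q := by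
    rw [hK]; field_simp; try ring
  have e3 : μ * (K - 1 / (q:ℝ))
      = (μ * (μ * (1 - μ) * (q : ℝ) / v - 1)) / q := by
    rw [hK]; field_simp; try ring
  have e4 : (1 - μ) * (K - 1 / (q:ℝ)) + 1 - ((⌈c * (q : ℝ)⌉₊ : ℕ) : ℝ) / q
      = (((1 - μ) * (μ * (1 - μ) * (q : ℝ) / v - 1)) + (q : ℝ) - ((⌈c * (q : ℝ)⌉₊ : ℕ) : ℝ)) / q := by
    rw [hK]; field_simp; try ring
  rw [e1, e2, e3, e4, div_mul_div_comm, div_mul_div_comm, key]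
end

section
/- Let $\mu \in \mathbb{R}$ and $\sigma > 0$, let $\Phi$ denote the standard normal cumulative distribution function, and define Owen's T function by $\mathrm{T}(h,a) = \frac{1}{2\pi}\int_0^a \frac{e^{-h^2(1+x^2)/2}}{1+x^2}\,dx$. Then $\int_{\mathbb{R}} \Phi(x)^2 \, \frac{1}{\sqrt{2\pi\sigma^2}} e^{-(x-\mu)^2/(2\sigma^2)} \, dx = \Phi\!\left(\frac{\mu}{\sqrt{1+\sigma^2}}\right) - 2\,\mathrm{T}\!\left(\frac{\mu}{\sqrt{1+\sigma^2}},\, \frac{1}{\sqrt{1+2\sigma^2}}\right)$. -/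
open MeasureTheory Real

/-- The standard normal cumulative distribution function. -/
noncomputable def stdNormalCDF (x : ℝ) : ℝ :=
  ∫ t in Set.Iic x, (Real.sqrt (2 * Real.pi))⁻¹ * Real.exp (-t ^ 2 / 2)

/-- Owen's T function: `T(h,a) = (2π)⁻¹ ∫_0^a exp(-h²(1+x²)/2)/(1+x²) dx`. -/
noncomputable def owenT (h a : ℝ) : ℝ :=
  (2 * Real.pi)⁻¹ * ∫ x in (0 : ℝ)..a, Real.exp (-h ^ 2 * (1 + x ^ 2) / 2) / (1 + x ^ 2)

noncomputable def phi (t : ℝ) : ℝ := (Real.sqrt (2 * Real.pi))⁻¹ * Real.exp (-t ^ 2 / 2)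

lemma phi_eq : phi = fun t => (Real.sqrt (2 * Real.pi))⁻¹ * Real.exp (-(2⁻¹) * t ^ 2) := by
  funext t; simp only [phi]; ring_nf

lemma integrable_phi : Integrable phi := by
  rw [phi_eq]
  exact (integrable_exp_neg_mul_sq (by norm_num)).const_mul _

lemma continuous_phi : Continuous phi := by
  rw [phi_eq]; continuity

lemma integral_phi : ∫ t : ℝ, phi t = 1 := by
  rw [phi_eq]
  rw [MeasureTheory.integral_const_mul, integral_gaussian]
  rw [← Real.sqrt_inv, ← Real.sqrt_mul (by positivity)]
  rw [show (2 * π)⁻¹ * (π / 2⁻¹) = 1 by field_simp]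
  exact Real.sqrt_one

lemma cdf_eq (x : ℝ) : stdNormalCDF x = ∫ t in Set.Iic x, phi t := rfl

lemma phi_neg (t : ℝ) : phi (-t) = phi t := by simp [phi]

lemma phi_nonneg (t : ℝ) : 0 ≤ phi t := by unfold phi; positivity

lemma cdf_nonneg (x : ℝ) : 0 ≤ stdNormalCDF x := by
  rw [cdf_eq]
  exact MeasureTheory.integral_nonneg fun t => phi_nonneg t

lemma cdf_le_one (x : ℝ) : stdNormalCDF x ≤ 1 := by
  rw [cdf_eq, ← integral_phi]
  exact MeasureTheory.setIntegral_le_integral integrable_phi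
    (Filter.Eventually.of_forall fun t => phi_nonneg t)

lemma cdf_add_cdf_neg (x : ℝ) : stdNormalCDF (-x) + stdNormalCDF x = 1 := by
  rw [cdf_eq, cdf_eq, ← integral_phi]
  have h1 : ∫ t in Set.Iic (-x), phi t = ∫ t in Set.Ioi x, phi t := by
    rw [show ∫ t in Set.Iic (-x), phi t = ∫ t in Set.Iic (-x), phi (-t) by
      simp only [phi_neg], integral_comp_neg_Iic, neg_neg]
  rw [h1, add_comm]
  rw [← MeasureTheory.setIntegral_union (Set.Iic_disjoint_Ioi le_rfl) measurableSet_Ioi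
    integrable_phi.integrableOn integrable_phi.integrableOn, Set.Iic_union_Ioi]
  simp [Measure.restrict_univ]

lemma cdf_zero : stdNormalCDF 0 = 1 / 2 := by
  have := cdf_add_cdf_neg 0
  rw [neg_zero] at this
  linarith

lemma hasDerivAt_cdf (x : ℝ) : HasDerivAt stdNormalCDF (phi x) x := by
  have key : ∀ y : ℝ, stdNormalCDF y = stdNormalCDF 0 + ∫ t in (0:ℝ)..y, phi t := by
    intro y
    rw [cdf_eq, cdf_eq]
    rw [← intervalIntegral.integral_Iic_sub_Iic integrable_phi.integrableOn
      integrable_phi.integrableOn]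
    ring
  have : HasDerivAt (fun y => stdNormalCDF 0 + ∫ t in (0:ℝ)..y, phi t) (phi x) x := by
    refine HasDerivAt.const_add _ ?_
    exact intervalIntegral.integral_hasDerivAt_right
      (continuous_phi.intervalIntegrable _ _)
      (continuous_phi.stronglyMeasurableAtFilter _ _)
      continuous_phi.continuousAt
  exact this.congr_of_eventuallyEq (Filter.Eventually.of_forall key)

lemma continuous_cdf : Continuous stdNormalCDF :=
  continuous_iff_continuousAt.2 fun x => (hasDerivAt_cdf x).continuousAt

lemma hasDerivAt_owen_integrand (h t : ℝ) :
    HasDerivAt (fun h : ℝ => Real.exp (-h ^ 2 * (1 + t ^ 2) / 2) / (1 + t ^ 2))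
      (-h * Real.exp (-h ^ 2 * (1 + t ^ 2) / 2)) h := by
  have h1 : HasDerivAt (fun h : ℝ => -h ^ 2 * (1 + t ^ 2) / 2) (-h * (1 + t ^ 2)) h := by
    have := ((hasDerivAt_pow 2 h).neg.mul_const (1 + t ^ 2)).div_const 2
    refine this.congr_deriv ?_; ring
  have h2 := (h1.exp).div_const (1 + t ^ 2)
  have ht : (0:ℝ) < 1 + t ^ 2 := by positivity
  refine h2.congr_deriv ?_
  field_simp

lemma sub_hx (h : ℝ) :
    ∫ x in (0:ℝ)..1, h * Real.exp (-(h*x)^2/2) = ∫ u in (0:ℝ)..h, Real.exp (-u^2/2) := by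
  have := intervalIntegral.integral_comp_smul_deriv (f := fun x : ℝ => h * x)
    (f' := fun _ : ℝ => h) (g := fun u : ℝ => Real.exp (-u^2/2)) (a := 0) (b := 1)
    (fun x _ => by simpa using (hasDerivAt_id x).const_mul h) continuousOn_const (by continuity)
  simpa using this

lemma intOn_0h (h : ℝ) : ∫ u in (0:ℝ)..h, Real.exp (-u^2/2)
    = Real.sqrt (2 * Real.pi) * (stdNormalCDF h - 1/2) := by
  have key : stdNormalCDF h - stdNormalCDF 0 = ∫ u in (0:ℝ)..h, phi u := by
    rw [cdf_eq, cdf_eq]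
    exact intervalIntegral.integral_Iic_sub_Iic integrable_phi.integrableOn
      integrable_phi.integrableOn
  rw [cdf_zero] at key
  have : ∫ u in (0:ℝ)..h, phi u
      = (Real.sqrt (2 * Real.pi))⁻¹ * ∫ u in (0:ℝ)..h, Real.exp (-u^2/2) := by
    rw [← intervalIntegral.integral_const_mul]; rfl
  rw [this] at key
  have hpos : (0:ℝ) < Real.sqrt (2 * Real.pi) := Real.sqrt_pos.2 (by positivity)
  field_simp at key ⊢
  linarith [key]

lemma cont_F (h : ℝ) :
    Continuous (fun x : ℝ => Real.exp (-h ^ 2 * (1 + x ^ 2) / 2) / (1 + x ^ 2)) := by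
  apply Continuous.div (by continuity) (by continuity)
  intro x; positivity

lemma cont_F' (t : ℝ) :
    Continuous (fun h : ℝ => Real.exp (-h ^ 2 * (1 + t ^ 2) / 2) / (1 + t ^ 2)) := by
  apply Continuous.div (by continuity) (by continuity)
  intro x; positivity

lemma hasDerivAt_owenT_one (h : ℝ) :
    HasDerivAt (fun h => owenT h 1) (-(phi h) * (stdNormalCDF h - 1/2)) h := by
  have main := intervalIntegral.hasDerivAt_integral_of_dominated_loc_of_deriv_le
    (F := fun h x => Real.exp (-h ^ 2 * (1 + x ^ 2) / 2) / (1 + x ^ 2))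
    (F' := fun h x => -h * Real.exp (-h ^ 2 * (1 + x ^ 2) / 2))
    (x₀ := h) (a := 0) (b := 1) (μ := volume) (bound := fun _ => |h| + 1)
    (s := Metric.ball h 1) (Metric.ball_mem_nhds h one_pos)
    (Filter.Eventually.of_forall fun x => (cont_F x).aestronglyMeasurable)
    ((cont_F h).intervalIntegrable _ _)
    (Continuous.aestronglyMeasurable (by continuity)).restrict
    (Filter.Eventually.of_forall fun t _ => fun x hx => by
      have h1 : Real.exp (-x ^ 2 * (1 + t ^ 2) / 2) ≤ 1 := by
        rw [Real.exp_le_one_iff]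
        have : (0:ℝ) ≤ x ^ 2 * (1 + t ^ 2) := by positivity
        nlinarith
      have h2 : |x| ≤ |h| + 1 := by
        have := abs_sub_abs_le_abs_sub x h
        simp [Metric.mem_ball, Real.dist_eq] at hx
        linarith
      calc ‖-x * Real.exp (-x ^ 2 * (1 + t ^ 2) / 2)‖
          = |x| * Real.exp (-x ^ 2 * (1 + t ^ 2) / 2) := by
            rw [norm_mul, norm_neg, Real.norm_eq_abs, Real.norm_eq_abs,
              abs_of_pos (Real.exp_pos _)]
        _ ≤ (|h| + 1) * 1 := by
            apply mul_le_mul h2 h1 (Real.exp_pos _).le (by positivity)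
        _ = |h| + 1 := mul_one _)
    (intervalIntegrable_const)
    (Filter.Eventually.of_forall fun t _ => fun x _ => hasDerivAt_owen_integrand x t)
  have hD := main.2.const_mul (2 * Real.pi)⁻¹
  have hval : -(phi h) * (stdNormalCDF h - 1/2)
      = (2 * Real.pi)⁻¹ * ∫ x in (0:ℝ)..1, -h * Real.exp (-h ^ 2 * (1 + x ^ 2) / 2) := by
    have e1 : ∀ x : ℝ, -h * Real.exp (-h ^ 2 * (1 + x ^ 2) / 2)
        = (-Real.exp (-h^2/2)) * (h * Real.exp (-(h*x)^2/2)) := by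
      intro x
      rw [show -h ^ 2 * (1 + x ^ 2) / 2 = -h^2/2 + -(h*x)^2/2 by ring, Real.exp_add]
      ring
    rw [show (∫ x in (0:ℝ)..1, -h * Real.exp (-h ^ 2 * (1 + x ^ 2) / 2))
        = (-Real.exp (-h^2/2)) * ∫ x in (0:ℝ)..1, h * Real.exp (-(h*x)^2/2) by
      rw [← intervalIntegral.integral_const_mul]
      exact intervalIntegral.integral_congr fun x _ => e1 x]
    rw [sub_hx, intOn_0h]
    have h2π : Real.sqrt (2 * Real.pi) ^ 2 = 2 * Real.pi := Real.sq_sqrt (by positivity)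
    have hpos : (0:ℝ) < Real.sqrt (2 * Real.pi) := Real.sqrt_pos.2 (by positivity)
    have key : (2 * Real.pi)⁻¹ * Real.sqrt (2 * Real.pi) = (Real.sqrt (2 * Real.pi))⁻¹ := by
      have hms := Real.mul_self_sqrt (by positivity : (0:ℝ) ≤ 2 * Real.pi)
      calc (2 * Real.pi)⁻¹ * Real.sqrt (2 * Real.pi)
          = (Real.sqrt (2 * Real.pi) * Real.sqrt (2 * Real.pi))⁻¹ * Real.sqrt (2 * Real.pi) := by
            rw [hms]
        _ = (Real.sqrt (2 * Real.pi))⁻¹ := by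
            rw [mul_inv, mul_assoc, inv_mul_cancel₀ hpos.ne', mul_one]
    unfold phi
    linear_combination (Real.exp (-h^2/2) * (stdNormalCDF h - 1/2)) * key
  rw [show (fun h => owenT h 1) = (fun h : ℝ =>
      (2 * Real.pi)⁻¹ * ∫ x in (0:ℝ)..1, Real.exp (-h ^ 2 * (1 + x ^ 2) / 2) / (1 + x ^ 2))
    from rfl, hval]
  exact hD

lemma hasDerivAt_cdfprod (h : ℝ) :
    HasDerivAt (fun h => stdNormalCDF h * (1 - stdNormalCDF h) / 2)
      (-(phi h) * (stdNormalCDF h - 1/2)) h := by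
  have := ((hasDerivAt_cdf h).mul ((hasDerivAt_const h (1:ℝ)).sub (hasDerivAt_cdf h))).div_const 2
  refine this.congr_deriv ?_
  simp only [Pi.sub_apply]; ring

lemma owenT_one (h : ℝ) : owenT h 1 = stdNormalCDF h * (1 - stdNormalCDF h) / 2 := by
  have hD : ∀ x : ℝ, HasDerivAt
      (fun h => owenT h 1 - stdNormalCDF h * (1 - stdNormalCDF h) / 2) 0 x := by
    intro x
    have := (hasDerivAt_owenT_one x).sub (hasDerivAt_cdfprod x)
    simpa [Pi.sub_def] using this
  have hconst := is_const_of_deriv_eq_zero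
    (f := fun h => owenT h 1 - stdNormalCDF h * (1 - stdNormalCDF h) / 2)
    (fun x => (hD x).differentiableAt) (fun x => (hD x).deriv) h 0
  have h0 : owenT 0 1 - stdNormalCDF 0 * (1 - stdNormalCDF 0) / 2 = 0 := by
    rw [cdf_zero]
    have : owenT 0 1 = (2 * Real.pi)⁻¹ * ∫ x in (0:ℝ)..1, 1 / (1 + x ^ 2) := by
      unfold owenT
      congr 1
      apply intervalIntegral.integral_congr
      intro x _
      norm_num
    rw [this, integral_one_div_one_add_sq, Real.arctan_one, Real.arctan_zero]
    have : Real.pi ≠ 0 := Real.pi_ne_zero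
    field_simp
    ring
  have := hconst.trans h0
  linarith [this]

noncomputable def gpdf (μ σ : ℝ) (x : ℝ) : ℝ :=
  (Real.sqrt (2 * Real.pi * σ ^ 2))⁻¹ * Real.exp (-(x - μ) ^ 2 / (2 * σ ^ 2))

lemma sqrt2πσ {σ : ℝ} (hσ : 0 < σ) :
    Real.sqrt (2 * Real.pi * σ ^ 2) = Real.sqrt (2 * Real.pi) * σ := by
  rw [Real.sqrt_mul (by positivity), Real.sqrt_sq hσ.le]

lemma gpdf_nonneg (μ σ x : ℝ) : 0 ≤ gpdf μ σ x := by unfold gpdf; positivity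

lemma continuous_gpdf (μ σ : ℝ) : Continuous (gpdf μ σ) := by
  unfold gpdf; continuity

lemma integrable_gpdf (μ : ℝ) {σ : ℝ} (hσ : 0 < σ) : Integrable (gpdf μ σ) := by
  unfold gpdf
  apply Integrable.const_mul
  have h1 : (fun x : ℝ => Real.exp (-(x - μ) ^ 2 / (2 * σ ^ 2)))
      = fun x => Real.exp (-(2 * σ ^ 2)⁻¹ * (x - μ) ^ 2) := by
    funext x; congr 1; field_simp
  rw [h1]
  exact (integrable_exp_neg_mul_sq (by positivity)).comp_sub_right μ

lemma gpdf_comp {σ : ℝ} (hσ : 0 < σ) (μ z : ℝ) :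
    gpdf μ σ (μ + σ * z) = σ⁻¹ * phi z := by
  simp only [gpdf, phi, sqrt2πσ hσ]
  rw [show -(μ + σ * z - μ) ^ 2 / (2 * σ ^ 2) = -z ^ 2 / 2 by
    field_simp; ring]
  rw [mul_inv]; ring

lemma integral_comp_affine (f : ℝ → ℝ) {σ : ℝ} (hσ : 0 < σ) (μ : ℝ) :
    ∫ x : ℝ, f x = σ * ∫ z : ℝ, f (μ + σ * z) := by
  have h1 : ∫ z : ℝ, f (μ + σ * z) = |σ⁻¹| • ∫ y : ℝ, f (μ + y) :=
    MeasureTheory.Measure.integral_comp_mul_left (fun y => f (μ + y)) σ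
  have h2 : ∫ y : ℝ, f (μ + y) = ∫ y : ℝ, f y := by
    simp_rw [add_comm μ]
    exact integral_add_right_eq_self f μ
  rw [h1, h2, abs_of_pos (by positivity : (0:ℝ) < σ⁻¹), smul_eq_mul]
  field_simp

lemma gauss_shift {b : ℝ} (hb : 0 < b) (d : ℝ) :
    ∫ z : ℝ, Real.exp (-b * (z + d) ^ 2) = Real.sqrt (Real.pi / b) := by
  have h := integral_add_right_eq_self (μ := volume) (fun z : ℝ => Real.exp (-b * z ^ 2)) d
  calc ∫ z : ℝ, Real.exp (-b * (z + d) ^ 2)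
      = ∫ z : ℝ, (fun z : ℝ => Real.exp (-b * z ^ 2)) (z + d) := rfl
    _ = ∫ z : ℝ, Real.exp (-b * z ^ 2) := h
    _ = Real.sqrt (Real.pi / b) := integral_gaussian b

lemma phi_le (t : ℝ) : phi t ≤ (Real.sqrt (2 * Real.pi))⁻¹ := by
  unfold phi
  have h1 : Real.exp (-t ^ 2 / 2) ≤ 1 := by
    rw [Real.exp_le_one_iff]; nlinarith [sq_nonneg t]
  have h2 : (0:ℝ) < (Real.sqrt (2 * Real.pi))⁻¹ := by positivity
  nlinarith

lemma conv_phi {σ : ℝ} (hσ : 0 < σ) (ν : ℝ) :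
    ∫ z : ℝ, phi (ν + σ * z) * phi z
      = (Real.sqrt (1 + σ ^ 2))⁻¹ * phi (ν / Real.sqrt (1 + σ ^ 2)) := by
  have h1σ : (0:ℝ) < 1 + σ ^ 2 := by positivity
  have step1 : ∀ z : ℝ, phi (ν + σ * z) * phi z
      = ((Real.sqrt (2 * Real.pi))⁻¹ * (Real.sqrt (2 * Real.pi))⁻¹
          * Real.exp (-ν ^ 2 / (2 * (1 + σ ^ 2))))
        * Real.exp (-((1 + σ ^ 2) / 2) * (z + σ * ν / (1 + σ ^ 2)) ^ 2) := by
    intro z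
    unfold phi
    have e : Real.exp (-(ν + σ * z) ^ 2 / 2) * Real.exp (-z ^ 2 / 2)
        = Real.exp (-ν ^ 2 / (2 * (1 + σ ^ 2)))
          * Real.exp (-((1 + σ ^ 2) / 2) * (z + σ * ν / (1 + σ ^ 2)) ^ 2) := by
      rw [← Real.exp_add, ← Real.exp_add]
      congr 1
      field_simp
      ring
    calc ((Real.sqrt (2 * Real.pi))⁻¹ * Real.exp (-(ν + σ * z) ^ 2 / 2))
          * ((Real.sqrt (2 * Real.pi))⁻¹ * Real.exp (-z ^ 2 / 2))
        = (Real.sqrt (2 * Real.pi))⁻¹ * (Real.sqrt (2 * Real.pi))⁻¹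
            * (Real.exp (-(ν + σ * z) ^ 2 / 2) * Real.exp (-z ^ 2 / 2)) := by ring
      _ = _ := by rw [e]; ring
  rw [show (fun z : ℝ => phi (ν + σ * z) * phi z) = _ from funext step1]
  rw [MeasureTheory.integral_const_mul, gauss_shift (by positivity)]
  have hc : (0:ℝ) < Real.sqrt (1 + σ ^ 2) := Real.sqrt_pos.2 h1σ
  have hc2 : Real.sqrt (1 + σ ^ 2) ^ 2 = 1 + σ ^ 2 := Real.sq_sqrt h1σ.le
  have hK : (0:ℝ) < Real.sqrt (2 * Real.pi) := Real.sqrt_pos.2 (by positivity)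
  have hsq : Real.sqrt (Real.pi / ((1 + σ ^ 2) / 2))
      = Real.sqrt (2 * Real.pi) / Real.sqrt (1 + σ ^ 2) := by
    rw [show Real.pi / ((1 + σ ^ 2) / 2) = (2 * Real.pi) / (1 + σ ^ 2) by field_simp]
    exact Real.sqrt_div (by positivity) _
  rw [hsq]
  unfold phi
  rw [show -(ν / Real.sqrt (1 + σ ^ 2)) ^ 2 / 2 = -ν ^ 2 / (2 * (1 + σ ^ 2)) by
    rw [div_pow, hc2]; field_simp]
  have hKA : (Real.sqrt (2 * Real.pi))⁻¹ * Real.sqrt (2 * Real.pi) = 1 :=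
    inv_mul_cancel₀ hK.ne'
  field_simp

lemma integrable_cdf_mul_phi (ν σ : ℝ) :
    Integrable (fun z : ℝ => stdNormalCDF (ν + σ * z) * phi z) := by
  apply Integrable.mono integrable_phi
  · exact (Continuous.mul (continuous_cdf.comp (by continuity)) continuous_phi).aestronglyMeasurable
  · refine Filter.Eventually.of_forall fun z => ?_
    rw [Real.norm_eq_abs, Real.norm_eq_abs, abs_of_nonneg (phi_nonneg z),
      abs_of_nonneg (mul_nonneg (cdf_nonneg _) (phi_nonneg z))]
    nlinarith [cdf_le_one (ν + σ * z), cdf_nonneg (ν + σ * z), phi_nonneg z]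

lemma hasDerivAt_F {σ : ℝ} (hσ : 0 < σ) (ν : ℝ) :
    HasDerivAt (fun ν => ∫ z : ℝ, stdNormalCDF (ν + σ * z) * phi z)
      ((Real.sqrt (1 + σ ^ 2))⁻¹ * phi (ν / Real.sqrt (1 + σ ^ 2))) ν := by
  have main := hasDerivAt_integral_of_dominated_loc_of_deriv_le
    (F := fun ν z => stdNormalCDF (ν + σ * z) * phi z)
    (F' := fun ν z => phi (ν + σ * z) * phi z)
    (x₀ := ν) (μ := volume) (bound := fun z => (Real.sqrt (2 * Real.pi))⁻¹ * phi z)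
    (s := Metric.ball ν 1) (Metric.ball_mem_nhds ν one_pos)
    (Filter.Eventually.of_forall fun x =>
      (Continuous.mul (continuous_cdf.comp (by continuity)) continuous_phi).aestronglyMeasurable)
    (integrable_cdf_mul_phi ν σ)
    ((Continuous.mul (continuous_phi.comp (by continuity)) continuous_phi).aestronglyMeasurable)
    (Filter.Eventually.of_forall fun z x _ => by
      rw [Real.norm_eq_abs, abs_of_nonneg (mul_nonneg (phi_nonneg _) (phi_nonneg _))]
      have := phi_le (x + σ * z)
      nlinarith [phi_nonneg z, phi_nonneg (x + σ * z)])
    (integrable_phi.const_mul _)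
    (Filter.Eventually.of_forall fun z x _ => by
      have hin : HasDerivAt (fun ν : ℝ => ν + σ * z) 1 x := (hasDerivAt_id x).add_const _
      have := ((hasDerivAt_cdf (x + σ * z)).comp x hin).mul_const (phi z)
      simpa using this)
  have := main.2
  rwa [conv_phi hσ ν] at this

lemma F_zero {σ : ℝ} (hσ : 0 < σ) :
    ∫ z : ℝ, stdNormalCDF (0 + σ * z) * phi z = 1 / 2 := by
  have hneg : ∫ z : ℝ, stdNormalCDF (0 + σ * z) * phi z
      = ∫ z : ℝ, stdNormalCDF (-(σ * z)) * phi z := by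
    rw [← integral_neg_eq_self (fun z : ℝ => stdNormalCDF (0 + σ * z) * phi z)]
    congr 1
    funext z
    rw [phi_neg]
    ring_nf
  have hsum : (∫ z : ℝ, stdNormalCDF (0 + σ * z) * phi z)
      + ∫ z : ℝ, stdNormalCDF (0 + σ * z) * phi z = 1 := by
    nth_rewrite 2 [hneg]
    rw [← MeasureTheory.integral_add (integrable_cdf_mul_phi 0 σ)]
    · rw [← integral_phi]
      congr 1
      funext z
      have := cdf_add_cdf_neg (σ * z)
      have h0 : (0:ℝ) + σ * z = σ * z := by ring
      rw [h0]
      linear_combination phi z * this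
    · have := integrable_cdf_mul_phi 0 (-σ)
      simpa [neg_mul] using this
  linarith

lemma lemC (μ : ℝ) {σ : ℝ} (hσ : 0 < σ) :
    ∫ x : ℝ, stdNormalCDF x * gpdf μ σ x
      = stdNormalCDF (μ / Real.sqrt (1 + σ ^ 2)) := by
  set c := Real.sqrt (1 + σ ^ 2) with hc_def
  have h1σ : (0:ℝ) < 1 + σ ^ 2 := by positivity
  have hc : (0:ℝ) < c := Real.sqrt_pos.2 h1σ
  -- change of variables
  have key : ∀ ν : ℝ, ∫ x : ℝ, stdNormalCDF x * gpdf ν σ x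
      = ∫ z : ℝ, stdNormalCDF (ν + σ * z) * phi z := by
    intro ν
    rw [integral_comp_affine (fun x => stdNormalCDF x * gpdf ν σ x) hσ ν]
    have : ∀ z : ℝ, stdNormalCDF (ν + σ * z) * gpdf ν σ (ν + σ * z)
        = σ⁻¹ * (stdNormalCDF (ν + σ * z) * phi z) := by
      intro z; rw [gpdf_comp hσ]; ring
    simp_rw [this]
    rw [MeasureTheory.integral_const_mul]
    field_simp
  -- derivative matching
  have hD : ∀ ν : ℝ, HasDerivAt
      (fun ν => (∫ z : ℝ, stdNormalCDF (ν + σ * z) * phi z) - stdNormalCDF (ν / c)) 0 ν := by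
    intro ν
    have h1 := hasDerivAt_F hσ ν
    have h2 : HasDerivAt (fun ν : ℝ => stdNormalCDF (ν / c)) (c⁻¹ * phi (ν / c)) ν := by
      have hin : HasDerivAt (fun ν : ℝ => ν / c) c⁻¹ ν := by
        simpa [one_div] using (hasDerivAt_id ν).div_const c
      have := (hasDerivAt_cdf (ν / c)).comp ν hin
      simpa [mul_comm, Function.comp_def] using this
    have := h1.sub h2
    simpa [Pi.sub_def, hc_def] using this
  have hconst := is_const_of_deriv_eq_zero
    (f := fun ν => (∫ z : ℝ, stdNormalCDF (ν + σ * z) * phi z) - stdNormalCDF (ν / c))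
    (fun x => (hD x).differentiableAt) (fun x => (hD x).deriv) μ 0
  rw [F_zero hσ] at hconst
  rw [show (0:ℝ) / c = 0 by simp, cdf_zero] at hconst
  rw [key μ]
  have : (1:ℝ)/2 - 1/2 = 0 := by norm_num
  rw [this] at hconst
  linarith [hconst]

lemma gauss_complete {c σ : ℝ} (hc : 0 < c) (hσ : 0 < σ) (μ : ℝ) :
    ∫ x : ℝ, Real.exp (-(c * x ^ 2) / 2) * gpdf μ σ x
      = (Real.sqrt (1 + c * σ ^ 2))⁻¹ * Real.exp (-(c * μ ^ 2) / (2 * (1 + c * σ ^ 2))) := by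
  have hk : (0:ℝ) < 1 + c * σ ^ 2 := by positivity
  set A : ℝ := (1 + c * σ ^ 2) / σ ^ 2 with hA_def
  have hA : (0:ℝ) < A := by positivity
  have hKpos : (0:ℝ) < Real.sqrt (2 * Real.pi * σ ^ 2) := Real.sqrt_pos.2 (by positivity)
  have step1 : ∀ x : ℝ, Real.exp (-(c * x ^ 2) / 2) * gpdf μ σ x
      = ((Real.sqrt (2 * Real.pi * σ ^ 2))⁻¹
          * Real.exp (-(c * μ ^ 2) / (2 * (1 + c * σ ^ 2))))
        * Real.exp (-(A / 2) * (x + -(μ / (1 + c * σ ^ 2))) ^ 2) := by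
    intro x
    unfold gpdf
    have e : Real.exp (-(c * x ^ 2) / 2) * Real.exp (-(x - μ) ^ 2 / (2 * σ ^ 2))
        = Real.exp (-(c * μ ^ 2) / (2 * (1 + c * σ ^ 2)))
          * Real.exp (-(A / 2) * (x + -(μ / (1 + c * σ ^ 2))) ^ 2) := by
      rw [← Real.exp_add, ← Real.exp_add]
      congr 1
      rw [hA_def]
      field_simp
      ring
    calc Real.exp (-(c * x ^ 2) / 2)
          * ((Real.sqrt (2 * Real.pi * σ ^ 2))⁻¹ * Real.exp (-(x - μ) ^ 2 / (2 * σ ^ 2)))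
        = (Real.sqrt (2 * Real.pi * σ ^ 2))⁻¹
            * (Real.exp (-(c * x ^ 2) / 2) * Real.exp (-(x - μ) ^ 2 / (2 * σ ^ 2))) := by ring
      _ = _ := by rw [e]; ring
  rw [show (fun x : ℝ => Real.exp (-(c * x ^ 2) / 2) * gpdf μ σ x) = _ from funext step1]
  rw [MeasureTheory.integral_const_mul, gauss_shift (by positivity : (0:ℝ) < A / 2)]
  have hsq : Real.sqrt (Real.pi / (A / 2)) = Real.sqrt (2 * Real.pi * σ ^ 2) / Real.sqrt (1 + c * σ ^ 2) := by
    rw [show Real.pi / (A / 2) = (2 * Real.pi * σ ^ 2) / (1 + c * σ ^ 2) by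
      rw [hA_def]; field_simp]
    exact Real.sqrt_div (by positivity) _
  rw [hsq]
  have hinv : (Real.sqrt (2 * Real.pi * σ ^ 2))⁻¹ * Real.sqrt (2 * Real.pi * σ ^ 2) = 1 :=
    inv_mul_cancel₀ hKpos.ne'
  field_simp

lemma contq {σ : ℝ} : Continuous (fun u : ℝ => 1 + σ ^ 2 + σ ^ 2 * u ^ 2) :=
  continuous_const.add (continuous_const.mul (continuous_pow 2))

lemma contS {σ : ℝ} : Continuous (fun u : ℝ => Real.sqrt (1 + σ ^ 2 + σ ^ 2 * u ^ 2)) :=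
  Real.continuous_sqrt.comp contq

lemma hf_deriv {σ : ℝ} (hσ : 0 < σ) (u : ℝ) :
    HasDerivAt (fun u : ℝ => u / Real.sqrt (1 + σ ^ 2 + σ ^ 2 * u ^ 2))
      ((1 + σ ^ 2) / Real.sqrt (1 + σ ^ 2 + σ ^ 2 * u ^ 2) ^ 3) u := by
  have hqpos : (0:ℝ) < 1 + σ ^ 2 + σ ^ 2 * u ^ 2 := by positivity
  have hSpos : (0:ℝ) < Real.sqrt (1 + σ ^ 2 + σ ^ 2 * u ^ 2) := Real.sqrt_pos.2 hqpos
  have hS2 : Real.sqrt (1 + σ ^ 2 + σ ^ 2 * u ^ 2) ^ 2 = 1 + σ ^ 2 + σ ^ 2 * u ^ 2 :=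
    Real.sq_sqrt hqpos.le
  have hq : HasDerivAt (fun u : ℝ => 1 + σ ^ 2 + σ ^ 2 * u ^ 2) (2 * σ ^ 2 * u) u := by
    have := ((hasDerivAt_pow 2 u).const_mul (σ ^ 2)).const_add (1 + σ ^ 2)
    refine this.congr_deriv ?_
    simp; ring
  have hS' : HasDerivAt (fun u : ℝ => Real.sqrt (1 + σ ^ 2 + σ ^ 2 * u ^ 2))
      (σ ^ 2 * u / Real.sqrt (1 + σ ^ 2 + σ ^ 2 * u ^ 2)) u := by
    have := hq.sqrt hqpos.ne'
    convert this using 1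
    field_simp
  have := (hasDerivAt_id u).div hS' hSpos.ne'
  refine this.congr_deriv ?_
  rw [show id u = u from rfl]
  have key : 1 * Real.sqrt (1 + σ ^ 2 + σ ^ 2 * u ^ 2)
        - u * (σ ^ 2 * u / Real.sqrt (1 + σ ^ 2 + σ ^ 2 * u ^ 2))
      = (1 + σ ^ 2) / Real.sqrt (1 + σ ^ 2 + σ ^ 2 * u ^ 2) := by
    rw [show 1 * Real.sqrt (1 + σ ^ 2 + σ ^ 2 * u ^ 2)
          - u * (σ ^ 2 * u / Real.sqrt (1 + σ ^ 2 + σ ^ 2 * u ^ 2))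
        = (Real.sqrt (1 + σ ^ 2 + σ ^ 2 * u ^ 2) ^ 2 - σ ^ 2 * u ^ 2)
            / Real.sqrt (1 + σ ^ 2 + σ ^ 2 * u ^ 2) by
      field_simp]
    rw [hS2]
    congr 1
    ring
  rw [key, div_div, show Real.sqrt (1 + σ ^ 2 + σ ^ 2 * u ^ 2)
      * Real.sqrt (1 + σ ^ 2 + σ ^ 2 * u ^ 2) ^ 2
    = Real.sqrt (1 + σ ^ 2 + σ ^ 2 * u ^ 2) ^ 3 by ring]

lemma subst_step (μ : ℝ) {σ : ℝ} (hσ : 0 < σ) :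
    (∫ u in (0:ℝ)..1, (1 + u ^ 2)⁻¹ *
        ((Real.sqrt (1 + σ ^ 2 + σ ^ 2 * u ^ 2))⁻¹
          * Real.exp (-((1 + u ^ 2) * μ ^ 2) / (2 * (1 + σ ^ 2 + σ ^ 2 * u ^ 2)))))
      = ∫ y in (0:ℝ)..(1 / Real.sqrt (1 + 2 * σ ^ 2)),
          Real.exp (-(μ / Real.sqrt (1 + σ ^ 2)) ^ 2 * (1 + y ^ 2) / 2) / (1 + y ^ 2) := by
  have h1σ : (0:ℝ) < 1 + σ ^ 2 := by positivity
  have hcpos : (0:ℝ) < Real.sqrt (1 + σ ^ 2) := Real.sqrt_pos.2 h1σ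
  have hc2 : Real.sqrt (1 + σ ^ 2) ^ 2 = 1 + σ ^ 2 := Real.sq_sqrt h1σ.le
  have hm2 : (μ / Real.sqrt (1 + σ ^ 2)) ^ 2 = μ ^ 2 / (1 + σ ^ 2) := by
    rw [div_pow, hc2]
  have hsub := intervalIntegral.integral_comp_smul_deriv
    (f := fun u : ℝ => u / Real.sqrt (1 + σ ^ 2 + σ ^ 2 * u ^ 2))
    (f' := fun u : ℝ => (1 + σ ^ 2) / Real.sqrt (1 + σ ^ 2 + σ ^ 2 * u ^ 2) ^ 3)
    (g := fun y : ℝ => Real.exp (-(μ / Real.sqrt (1 + σ ^ 2)) ^ 2 * (1 + y ^ 2) / 2) / (1 + y ^ 2))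
    (a := 0) (b := 1)
    (fun u _ => hf_deriv hσ u)
    (Continuous.continuousOn (by
      apply Continuous.div continuous_const (contS.pow 3)
      intro u
      exact pow_ne_zero 3 (Real.sqrt_pos.2 (by positivity)).ne'))
    (by
      apply Continuous.div
      · exact Real.continuous_exp.comp (by fun_prop)
      · fun_prop
      · intro y; positivity)
  have hf0 : (fun u : ℝ => u / Real.sqrt (1 + σ ^ 2 + σ ^ 2 * u ^ 2)) 0 = 0 := by norm_num
  have hf1 : (fun u : ℝ => u / Real.sqrt (1 + σ ^ 2 + σ ^ 2 * u ^ 2)) 1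
      = 1 / Real.sqrt (1 + 2 * σ ^ 2) := by
    show (1:ℝ) / Real.sqrt (1 + σ ^ 2 + σ ^ 2 * 1 ^ 2) = 1 / Real.sqrt (1 + 2 * σ ^ 2)
    rw [show (1:ℝ) + σ ^ 2 + σ ^ 2 * 1 ^ 2 = 1 + 2 * σ ^ 2 by ring]
  beta_reduce at hf0 hf1
  rw [hf0, hf1] at hsub
  rw [← hsub]
  apply intervalIntegral.integral_congr
  intro u _
  simp only [Function.comp_apply]
  have hcu : (0:ℝ) < 1 + u ^ 2 := by positivity
  have hqpos : (0:ℝ) < 1 + σ ^ 2 + σ ^ 2 * u ^ 2 := by positivity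
  have hSpos : (0:ℝ) < Real.sqrt (1 + σ ^ 2 + σ ^ 2 * u ^ 2) := Real.sqrt_pos.2 hqpos
  have hS2 : Real.sqrt (1 + σ ^ 2 + σ ^ 2 * u ^ 2) ^ 2 = 1 + σ ^ 2 + σ ^ 2 * u ^ 2 :=
    Real.sq_sqrt hqpos.le
  have hexp : -(μ / Real.sqrt (1 + σ ^ 2)) ^ 2
        * (1 + (u / Real.sqrt (1 + σ ^ 2 + σ ^ 2 * u ^ 2)) ^ 2) / 2
      = -((1 + u ^ 2) * μ ^ 2) / (2 * (1 + σ ^ 2 + σ ^ 2 * u ^ 2)) := by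
    rw [hm2, div_pow, hS2]
    field_simp
    ring
  have hfu2 : 1 + (u / Real.sqrt (1 + σ ^ 2 + σ ^ 2 * u ^ 2)) ^ 2
      = (1 + σ ^ 2) * (1 + u ^ 2) / (1 + σ ^ 2 + σ ^ 2 * u ^ 2) := by
    rw [div_pow, hS2]
    field_simp
    ring
  rw [smul_eq_mul]
  rw [hexp, hfu2]
  have hSS : Real.sqrt (1 + σ ^ 2 + σ ^ 2 * u ^ 2) * Real.sqrt (1 + σ ^ 2 + σ ^ 2 * u ^ 2)
      = 1 + σ ^ 2 + σ ^ 2 * u ^ 2 := by nlinarith [hS2]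
  have h3 : Real.sqrt (1 + σ ^ 2 + σ ^ 2 * u ^ 2) ^ 3
      = (1 + σ ^ 2 + σ ^ 2 * u ^ 2) * Real.sqrt (1 + σ ^ 2 + σ ^ 2 * u ^ 2) := by
    rw [pow_succ, hS2]
  rw [h3]
  field_simp

lemma lemD (μ : ℝ) {σ : ℝ} (hσ : 0 < σ) :
    ∫ x : ℝ, owenT x 1 * gpdf μ σ x
      = owenT (μ / Real.sqrt (1 + σ ^ 2)) (1 / Real.sqrt (1 + 2 * σ ^ 2)) := by
  -- Step 1: Fubini + inner Gaussian integral
  have step1 : ∫ x : ℝ, owenT x 1 * gpdf μ σ x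
      = (2 * Real.pi)⁻¹ * ∫ u in Set.Ioc (0:ℝ) 1, (1 + u ^ 2)⁻¹ *
          ((Real.sqrt (1 + σ ^ 2 + σ ^ 2 * u ^ 2))⁻¹
            * Real.exp (-((1 + u ^ 2) * μ ^ 2) / (2 * (1 + σ ^ 2 + σ ^ 2 * u ^ 2)))) := by
    have expand : ∀ x : ℝ, owenT x 1 * gpdf μ σ x
        = (2 * Real.pi)⁻¹ * ∫ u in Set.Ioc (0:ℝ) 1,
            Real.exp (-x ^ 2 * (1 + u ^ 2) / 2) / (1 + u ^ 2) * gpdf μ σ x := by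
      intro x
      unfold owenT
      rw [intervalIntegral.integral_of_le (by norm_num : (0:ℝ) ≤ 1), mul_assoc,
        ← MeasureTheory.integral_mul_const]
    simp_rw [expand]
    rw [MeasureTheory.integral_const_mul]
    congr 1
    have hint : Integrable (Function.uncurry fun (x u : ℝ) =>
        Real.exp (-x ^ 2 * (1 + u ^ 2) / 2) / (1 + u ^ 2) * gpdf μ σ x)
        (volume.prod (volume.restrict (Set.Ioc (0:ℝ) 1))) := by
      have hdom : Integrable (fun p : ℝ × ℝ => gpdf μ σ p.1 * 1)
          (volume.prod (volume.restrict (Set.Ioc (0:ℝ) 1))) := by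
        have hone : Integrable (fun _ : ℝ => (1:ℝ)) (volume.restrict (Set.Ioc (0:ℝ) 1)) :=
          integrableOn_const (by rw [Real.volume_Ioc]; exact ENNReal.ofReal_ne_top)
        exact (integrable_gpdf μ hσ).mul_prod hone
      refine hdom.mono ?_ ?_
      · apply Continuous.aestronglyMeasurable
        apply Continuous.mul
        · apply Continuous.div
          · exact Real.continuous_exp.comp (by fun_prop)
          · fun_prop
          · intro p; positivity
        · exact (continuous_gpdf μ σ).comp continuous_fst
      · refine Filter.Eventually.of_forall fun p => ?_
        obtain ⟨x, u⟩ := p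
        simp only [Function.uncurry_apply_pair, mul_one]
        have h1 : Real.exp (-x ^ 2 * (1 + u ^ 2) / 2) ≤ 1 := by
          rw [Real.exp_le_one_iff]
          nlinarith [sq_nonneg x, sq_nonneg u, sq_nonneg (x * u)]
        have h3 : (0:ℝ) < 1 + u ^ 2 := by positivity
        have h4 : Real.exp (-x ^ 2 * (1 + u ^ 2) / 2) / (1 + u ^ 2) ≤ 1 := by
          rw [div_le_one h3]
          nlinarith [Real.exp_pos (-x ^ 2 * (1 + u ^ 2) / 2)]
        have h5 : (0:ℝ) ≤ Real.exp (-x ^ 2 * (1 + u ^ 2) / 2) / (1 + u ^ 2) := by positivity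
        rw [Real.norm_eq_abs, Real.norm_eq_abs,
          abs_of_nonneg (gpdf_nonneg μ σ x),
          abs_of_nonneg (mul_nonneg h5 (gpdf_nonneg μ σ x))]
        nlinarith [gpdf_nonneg μ σ x]
    have swap := MeasureTheory.integral_integral_swap
      (f := fun (x u : ℝ) => Real.exp (-x ^ 2 * (1 + u ^ 2) / 2) / (1 + u ^ 2) * gpdf μ σ x)
      hint
    rw [swap]
    refine MeasureTheory.setIntegral_congr_fun measurableSet_Ioc fun u _ => ?_
    have hcu : (0:ℝ) < 1 + u ^ 2 := by positivity
    have inner : ∫ x : ℝ, Real.exp (-x ^ 2 * (1 + u ^ 2) / 2) / (1 + u ^ 2) * gpdf μ σ x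
        = (1 + u ^ 2)⁻¹ * ∫ x : ℝ, Real.exp (-((1 + u ^ 2) * x ^ 2) / 2) * gpdf μ σ x := by
      rw [← MeasureTheory.integral_const_mul]
      congr 1
      funext x
      rw [show -x ^ 2 * (1 + u ^ 2) / 2 = -((1 + u ^ 2) * x ^ 2) / 2 by ring]
      ring
    rw [inner, gauss_complete hcu hσ μ]
    rw [show (1:ℝ) + (1 + u ^ 2) * σ ^ 2 = 1 + σ ^ 2 + σ ^ 2 * u ^ 2 by ring]
  rw [step1, ← intervalIntegral.integral_of_le (by norm_num : (0:ℝ) ≤ 1), subst_step μ hσ]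
  rfl

/-- If `X ~ N(μ, σ²)` then
`E{Φ(X)²} = Φ(μ/√(1+σ²)) - 2 T(μ/√(1+σ²), 1/√(1+2σ²))`. -/
theorem gaussian_expectation_of_normalCDF_sq (μ σ : ℝ) (hσ : 0 < σ) :
    (∫ x : ℝ, stdNormalCDF x ^ 2 *
        ((Real.sqrt (2 * Real.pi * σ ^ 2))⁻¹ * Real.exp (-(x - μ) ^ 2 / (2 * σ ^ 2))))
      = stdNormalCDF (μ / Real.sqrt (1 + σ ^ 2))
        - 2 * owenT (μ / Real.sqrt (1 + σ ^ 2)) (1 / Real.sqrt (1 + 2 * σ ^ 2)) := by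
  have hpt : ∀ x : ℝ, stdNormalCDF x ^ 2 * gpdf μ σ x
      = stdNormalCDF x * gpdf μ σ x - 2 * (owenT x 1 * gpdf μ σ x) := by
    intro x
    linear_combination (2 * gpdf μ σ x) * owenT_one x
  have h1 : Integrable (fun x => stdNormalCDF x * gpdf μ σ x) := by
    apply Integrable.mono (integrable_gpdf μ hσ)
    · exact (continuous_cdf.mul (continuous_gpdf μ σ)).aestronglyMeasurable
    · refine Filter.Eventually.of_forall fun x => ?_
      rw [Real.norm_eq_abs, Real.norm_eq_abs, abs_of_nonneg (gpdf_nonneg μ σ x),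
        abs_of_nonneg (mul_nonneg (cdf_nonneg x) (gpdf_nonneg μ σ x))]
      nlinarith [cdf_le_one x, cdf_nonneg x, gpdf_nonneg μ σ x]
  have howen : (fun x => owenT x 1 * gpdf μ σ x)
      = fun x => (stdNormalCDF x * (1 - stdNormalCDF x) / 2) * gpdf μ σ x :=
    funext fun x => by rw [owenT_one]
  have h2 : Integrable (fun x => owenT x 1 * gpdf μ σ x) := by
    rw [howen]
    apply Integrable.mono (integrable_gpdf μ hσ)
    · apply Continuous.aestronglyMeasurable
      apply Continuous.mul _ (continuous_gpdf μ σ)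
      exact (continuous_cdf.mul (continuous_const.sub continuous_cdf)).div_const 2
    · refine Filter.Eventually.of_forall fun x => ?_
      rw [Real.norm_eq_abs, Real.norm_eq_abs, abs_of_nonneg (gpdf_nonneg μ σ x)]
      have hb : 0 ≤ stdNormalCDF x * (1 - stdNormalCDF x) / 2 := by
        nlinarith [cdf_le_one x, cdf_nonneg x]
      rw [abs_of_nonneg (mul_nonneg hb (gpdf_nonneg μ σ x))]
      nlinarith [gpdf_nonneg μ σ x, sq_nonneg (stdNormalCDF x - 1/2),
        mul_nonneg (gpdf_nonneg μ σ x) (sq_nonneg (stdNormalCDF x - 1/2))]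
  calc (∫ x : ℝ, stdNormalCDF x ^ 2 * gpdf μ σ x)
      = ∫ x : ℝ, (stdNormalCDF x * gpdf μ σ x - 2 * (owenT x 1 * gpdf μ σ x)) := by
        congr 1
        funext x
        exact hpt x
    _ = (∫ x : ℝ, stdNormalCDF x * gpdf μ σ x) - ∫ x : ℝ, 2 * (owenT x 1 * gpdf μ σ x) :=
        MeasureTheory.integral_sub h1 (h2.const_mul 2)
    _ = (∫ x : ℝ, stdNormalCDF x * gpdf μ σ x) - 2 * ∫ x : ℝ, owenT x 1 * gpdf μ σ x := by
        rw [MeasureTheory.integral_const_mul]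
    _ = _ := by rw [lemC μ hσ, lemD μ hσ]
end
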